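/- For r ≥ 2, the coefficient p_r(n) of x^n in ∏_{m≥1}(1+x^m)/(1-x^{2^r m}) equals the number of partitions of n where every part is odd or divisible by 2^r, which also equals the number of partitions of n where parts not divisible by 2^{r-1} are distinct; in particular p_2(n) = pod(n), the number of partitions of n with no repeated odd parts. -/

import Mathlib

open PowerSeries

namespace FrAux

noncomputable section

variable {α : Type*}

open Finset

open scoped Classical

/-- The partial product for the generating function for odd partitions.
TODO: As `m` tends to infinity, this converges (in the `X`-adic topology).

If `m` is sufficiently large, the `i`th coefficient gives the number of odd partitions of the
natural number `i`: proved in `oddGF_prop`.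
It is stated for an arbitrary field `α`, though it usually suffices to use `ℚ` or `ℝ`.
-/
def partialOddGF (m : ℕ) [Field α] :=
  ∏ i ∈ range m, (1 - (X : PowerSeries α) ^ (2 * i + 1))⁻¹

/-- The partial product for the generating function for distinct partitions.
TODO: As `m` tends to infinity, this converges (in the `X`-adic topology).

If `m` is sufficiently large, the `i`th coefficient gives the number of distinct partitions of the
natural number `i`: proved in `distinctGF_prop`.
It is stated for an arbitrary commutative semiring `α`, though it usually suffices to use `ℕ`, `ℚ`
or `ℝ`.
-/
def partialDistinctGF (m : ℕ) [CommSemiring α] :=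
  ∏ i ∈ range m, (1 + (X : PowerSeries α) ^ (i + 1))

open Finset.HasAntidiagonal

universe u
variable {ι : Type u}

/-- A convenience constructor for the power series whose coefficients indicate a subset. -/
def indicatorSeries (α : Type*) [Semiring α] (s : Set ℕ) : PowerSeries α :=
  PowerSeries.mk fun n => if n ∈ s then 1 else 0

theorem coeff_indicator (s : Set ℕ) [Semiring α] (n : ℕ) :
    coeff (R := α) n (indicatorSeries _ s) = if n ∈ s then 1 else 0 :=
  coeff_mk _ _

theorem coeff_indicator_pos (s : Set ℕ) [Semiring α] (n : ℕ) (h : n ∈ s) :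
    coeff (R := α) n (indicatorSeries _ s) = 1 := by rw [coeff_indicator, if_pos h]

theorem coeff_indicator_neg (s : Set ℕ) [Semiring α] (n : ℕ) (h : n ∉ s) :
    coeff (R := α) n (indicatorSeries _ s) = 0 := by rw [coeff_indicator, if_neg h]

theorem constantCoeff_indicator (s : Set ℕ) [Semiring α] :
    constantCoeff (R := α) (indicatorSeries _ s) = if 0 ∈ s then 1 else 0 :=
  rfl

theorem two_series (i : ℕ) [Semiring α] :
    1 + (X : PowerSeries α) ^ i.succ = indicatorSeries α {0, i.succ} := by
  ext n
  simp only [coeff_indicator, coeff_one, coeff_X_pow, Set.mem_insert_iff, Set.mem_singleton_iff,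
    map_add]
  cases' n with d
  · simp [(Nat.succ_ne_zero i).symm]
  · simp [Nat.succ_ne_zero d]

theorem num_series' [Field α] (i : ℕ) :
    (1 - (X : PowerSeries α) ^ (i + 1))⁻¹ = indicatorSeries α {k | i + 1 ∣ k} := by
  rw [PowerSeries.inv_eq_iff_mul_eq_one]
  · ext n
    cases n with
    | zero => simp [mul_sub, zero_pow, constantCoeff_indicator]
    | succ n =>
      simp only [coeff_one, if_false, mul_sub, mul_one, coeff_indicator,
        LinearMap.map_sub, reduceCtorEq]
      simp_rw [coeff_mul, coeff_X_pow, coeff_indicator, @boole_mul _ _ _ _]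
      erw [@sum_ite _ _ _ _ _ (fun _ => Classical.propDecidable _), sum_ite]
      simp_rw [@filter_filter _ _ _ _ _, sum_const_zero, add_zero, sum_const, nsmul_eq_mul, mul_one,
        sub_eq_iff_eq_add, zero_add]
      symm
      split_ifs with h
      · suffices #{a ∈ antidiagonal (n + 1) | i + 1 ∣ a.fst ∧ a.snd = i + 1} = 1 by
          simp only [Set.mem_setOf_eq]; convert congr_arg ((↑) : ℕ → α) this; norm_cast
        rw [card_eq_one]
        cases' h with p hp
        refine ⟨((i + 1) * (p - 1), i + 1), ?_⟩
        ext ⟨a₁, a₂⟩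
        simp only [mem_filter, Prod.mk_inj, HasAntidiagonal.mem_antidiagonal, mem_singleton]
        constructor
        · rintro ⟨a_left, ⟨a, rfl⟩, rfl⟩
          refine ⟨?_, rfl⟩
          rw [Nat.mul_sub_left_distrib, ← hp, ← a_left, mul_one, Nat.add_sub_cancel]
        · rintro ⟨rfl, rfl⟩
          match p with
          | 0 => rw [mul_zero] at hp; cases hp
          | p + 1 => rw [hp]; simp [mul_add]
      · suffices #{a ∈ antidiagonal (n + 1) | i + 1 ∣ a.fst ∧ a.snd = i + 1} = 0 by
          simp only [Set.mem_setOf_eq]; convert congr_arg ((↑) : ℕ → α) this; norm_cast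
        rw [card_eq_zero]
        apply eq_empty_of_forall_notMem
        simp only [Prod.forall, mem_filter, not_and, HasAntidiagonal.mem_antidiagonal]
        rintro _ h₁ h₂ ⟨a, rfl⟩ rfl
        apply h
        simp [← h₂]
  · simp [zero_pow]

theorem partialGF_prop (α : Type*) [CommSemiring α] (n : ℕ) (s : Finset ℕ) (hs : ∀ i ∈ s, 0 < i)
    (c : ℕ → Set ℕ) (hc : ∀ i, i ∉ s → 0 ∈ c i) :
    #{p : n.Partition | (∀ j, p.parts.count j ∈ c j) ∧ ∀ j ∈ p.parts, j ∈ s} =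
      coeff (R := α) n (∏ i ∈ s, indicatorSeries α ((· * i) '' c i)) := by
  simp_rw [coeff_prod, coeff_indicator, prod_boole, sum_boole]
  apply congr_arg
  simp only [mem_univ, forall_true_left, not_and, not_forall, exists_prop,
    Set.mem_image, not_exists]
  set φ : (a : Nat.Partition n) →
    a ∈ filter (fun p ↦ (∀ (j : ℕ), Multiset.count j p.parts ∈ c j) ∧ ∀ j ∈ p.parts, j ∈ s) univ →
    ℕ →₀ ℕ := fun p _ => {
      toFun := fun i => Multiset.count i p.parts • i
      support := Finset.filter (fun i => i ≠ 0) p.parts.toFinset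
      mem_support_toFun := fun a => by
        simp only [smul_eq_mul, ne_eq, mul_eq_zero, Multiset.count_eq_zero]
        rw [not_or, not_not]
        simp only [Multiset.mem_toFinset, not_not, mem_filter] }
  refine Finset.card_bij φ ?_ ?_ ?_
  · intro a ha
    simp only [φ, not_forall, not_exists, not_and, exists_prop, mem_filter]
    rw [mem_finsuppAntidiag]
    dsimp only [ne_eq, smul_eq_mul, id_eq, eq_mpr_eq_cast, le_eq_subset, Finsupp.coe_mk]
    simp only [mem_univ, forall_true_left, not_and, not_forall, exists_prop,
      mem_filter, true_and] at ha
    refine ⟨⟨?_, fun i ↦ ?_⟩, fun i _ ↦ ⟨a.parts.count i, ha.1 i, rfl⟩⟩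
    · conv_rhs => simp [← a.parts_sum]
      rw [sum_multiset_count_of_subset _ s]
      · simp only [smul_eq_mul]
      · intro i
        simp only [Multiset.mem_toFinset, not_not, mem_filter]
        apply ha.2
    · simp only [ne_eq, Multiset.mem_toFinset, not_not, mem_filter, and_imp]
      exact fun hi _ ↦ ha.2 i hi
  · intro p₁ hp₁ p₂ hp₂ h
    apply Nat.Partition.ext
    simp only [true_and, mem_univ, mem_filter] at hp₁ hp₂
    ext i
    simp only [φ, ne_eq, Multiset.mem_toFinset, not_not, smul_eq_mul, Finsupp.mk.injEq] at h
    by_cases hi : i = 0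
    · rw [hi]
      rw [Multiset.count_eq_zero_of_notMem]
      · rw [Multiset.count_eq_zero_of_notMem]
        intro a; exact Nat.lt_irrefl 0 (hs 0 (hp₂.2 0 a))
      intro a; exact Nat.lt_irrefl 0 (hs 0 (hp₁.2 0 a))
    · rw [← mul_left_inj' hi]
      rw [funext_iff] at h
      exact h.2 i
  · simp only [φ, mem_filter, mem_finsuppAntidiag, mem_univ, exists_prop, true_and, and_assoc]
    rintro f ⟨hf, hf₃, hf₄⟩
    have hf' : f ∈ finsuppAntidiag s n := mem_finsuppAntidiag.mpr ⟨hf, hf₃⟩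
    simp only [mem_finsuppAntidiag] at hf'
    refine ⟨⟨∑ i ∈ s, Multiset.replicate (f i / i) i, ?_, ?_⟩, ?_, ?_, ?_⟩
    · intro i hi
      simp only [exists_prop, Multiset.mem_sum, mem_map, Function.Embedding.coeFn_mk] at hi
      rcases hi with ⟨t, ht, z⟩
      apply hs
      rwa [Multiset.eq_of_mem_replicate z]
    · simp_rw [Multiset.sum_sum, Multiset.sum_replicate, Nat.nsmul_eq_mul]
      rw [← hf'.1]
      refine sum_congr rfl fun i hi => Nat.div_mul_cancel ?_
      rcases hf₄ i hi with ⟨w, _, hw₂⟩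
      rw [← hw₂]
      exact dvd_mul_left _ _
    · intro i
      simp_rw [Multiset.count_sum', Multiset.count_replicate, sum_ite_eq']
      split_ifs with h
      · rcases hf₄ i h with ⟨w, hw₁, hw₂⟩
        rwa [← hw₂, Nat.mul_div_cancel _ (hs i h)]
      · exact hc _ h
    · intro i hi
      rw [Multiset.mem_sum] at hi
      rcases hi with ⟨j, hj₁, hj₂⟩
      rwa [Multiset.eq_of_mem_replicate hj₂]
    · ext i
      simp_rw [Multiset.count_sum', Multiset.count_replicate, sum_ite_eq']
      simp only [ne_eq, Multiset.mem_toFinset, not_not, smul_eq_mul, ite_mul,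
        zero_mul, Finsupp.coe_mk]
      split_ifs with h
      · apply Nat.div_mul_cancel
        rcases hf₄ i h with ⟨w, _, hw₂⟩
        apply Dvd.intro_left _ hw₂
      · apply symm
        rw [← Finsupp.notMem_support_iff]
        exact notMem_mono hf'.2 h


/-! ### Helpers for the f_r theorem -/

theorem num_series'' (i : ℕ) (hi : 0 < i) :
    (1 - (X : PowerSeries ℚ) ^ i)⁻¹ = indicatorSeries ℚ {k | i ∣ k} := by
  obtain ⟨j, rfl⟩ := Nat.exists_eq_succ_of_ne_zero hi.ne'
  exact num_series' j

theorem constCoeff_one_sub_X_pow (e : ℕ) (he : 0 < e) :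
    constantCoeff (R := ℚ) (1 - X ^ e) ≠ 0 := by
  rw [map_sub, map_pow, constantCoeff_one, constantCoeff_X, zero_pow he.ne', sub_zero]
  exact one_ne_zero

theorem X_pow_dvd_inv_sub_one (e : ℕ) (he : 0 < e) :
    (X : PowerSeries ℚ) ^ e ∣ (1 - X ^ e)⁻¹ - 1 := by
  refine ⟨(1 - X ^ e)⁻¹, ?_⟩
  have h := PowerSeries.inv_mul_cancel (1 - X ^ e : PowerSeries ℚ)
    (constCoeff_one_sub_X_pow e he)
  linear_combination h

theorem X_pow_dvd_prod_sub_one {ι : Type*} {s : Finset ι} {f : ι → PowerSeries ℚ} {d : ℕ}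
    (h : ∀ i ∈ s, (X : PowerSeries ℚ) ^ d ∣ f i - 1) :
    (X : PowerSeries ℚ) ^ d ∣ (∏ i ∈ s, f i) - 1 := by
  induction s using Finset.cons_induction with
  | empty => simp
  | cons a s ha ih =>
    rw [Finset.prod_cons]
    have h1 := h a (Finset.mem_cons_self a s)
    have h2 := ih fun i hi => h i (Finset.mem_cons.2 (Or.inr hi))
    have key : f a * ∏ i ∈ s, f i - 1 = f a * ((∏ i ∈ s, f i) - 1) + (f a - 1) := by ring
    rw [key]
    exact dvd_add (h2.mul_left _) h1

theorem coeff_mul_eq_of_dvd (n : ℕ) (A B : PowerSeries ℚ)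
    (h : (X : PowerSeries ℚ) ^ (n + 1) ∣ B - 1) : coeff (R := ℚ) n (A * B) = coeff (R := ℚ) n A := by
  have hd : (X : PowerSeries ℚ) ^ (n + 1) ∣ A * B - A := by
    have : A * B - A = A * (B - 1) := by ring
    rw [this]; exact h.mul_left _
  have h0 := (PowerSeries.X_pow_dvd_iff.mp hd) n (Nat.lt_succ_self n)
  rw [map_sub, sub_eq_zero] at h0
  exact h0

theorem one_add_eq' (e : ℕ) (he : 0 < e) :
    (1 + (X : PowerSeries ℚ) ^ e) = (1 - X ^ (2 * e)) * (1 - X ^ e)⁻¹ := by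
  rw [PowerSeries.eq_mul_inv_iff_mul_eq (constCoeff_one_sub_X_pow _ he), two_mul, pow_add]
  ring

theorem coeff_mul_prod_inv (n : ℕ) (A : PowerSeries ℚ) {ι : Type*} (s : Finset ι) (e : ι → ℕ)
    (he : ∀ i ∈ s, n < e i) :
    coeff (R := ℚ) n (A * ∏ i ∈ s, (1 - X ^ e i : PowerSeries ℚ)⁻¹) = coeff (R := ℚ) n A := by
  refine coeff_mul_eq_of_dvd n A _ (X_pow_dvd_prod_sub_one fun i hi => ?_)
  exact dvd_trans (pow_dvd_pow X (he i hi)) (X_pow_dvd_inv_sub_one _ ((Nat.zero_le n).trans_lt (he i hi)))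

theorem coeff_mul_prod_one_sub (n : ℕ) (A : PowerSeries ℚ) {ι : Type*} (s : Finset ι) (e : ι → ℕ)
    (he : ∀ i ∈ s, n < e i) :
    coeff (R := ℚ) n (A * ∏ i ∈ s, (1 - X ^ e i : PowerSeries ℚ)) = coeff (R := ℚ) n A := by
  refine coeff_mul_eq_of_dvd n A _ (X_pow_dvd_prod_sub_one fun i hi => ?_)
  have : (1 - X ^ e i : PowerSeries ℚ) - 1 = -(X ^ e i) := by ring
  rw [this]
  exact (dvd_neg).2 (pow_dvd_pow X (he i hi))


theorem prod_one_add_eq (N : ℕ) :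
    (∏ m ∈ range N, (1 + (X : PowerSeries ℚ) ^ (m + 1))) =
      (∏ m ∈ (range N).filter (fun m => Odd (m + 1)), (1 - (X : PowerSeries ℚ) ^ (m + 1))⁻¹) *
        ∏ m ∈ range N \ range (N / 2), (1 - (X : PowerSeries ℚ) ^ (2 * (m + 1))) := by
  have hA : (∏ m ∈ range N, (1 + (X : PowerSeries ℚ) ^ (m + 1))) =
      (∏ m ∈ range N, (1 - (X : PowerSeries ℚ) ^ (2 * (m + 1)))) *
        ∏ m ∈ range N, (1 - (X : PowerSeries ℚ) ^ (m + 1))⁻¹ := by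
    rw [← prod_mul_distrib]
    exact prod_congr rfl fun m _ => one_add_eq' (m + 1) m.succ_pos
  have hsplit2 : (∏ m ∈ range N, (1 - (X : PowerSeries ℚ) ^ (2 * (m + 1)))) =
      (∏ m ∈ range N \ range (N / 2), (1 - (X : PowerSeries ℚ) ^ (2 * (m + 1)))) *
        ∏ m ∈ range (N / 2), (1 - (X : PowerSeries ℚ) ^ (2 * (m + 1))) :=
    (prod_sdiff (range_subset_range.2 (Nat.div_le_self N 2))).symm
  have himg : (range N).filter (fun m => ¬ Odd (m + 1)) = (range (N / 2)).image (fun k => 2 * k + 1) := by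
    ext m
    simp only [mem_filter, mem_range, mem_image, Nat.not_odd_iff_even, Nat.even_iff]
    constructor
    · rintro ⟨h1, h2⟩
      exact ⟨m / 2, by omega, by omega⟩
    · rintro ⟨k, hk, rfl⟩
      omega
  have hsplitInv : (∏ m ∈ range N, (1 - (X : PowerSeries ℚ) ^ (m + 1))⁻¹) =
      (∏ m ∈ (range N).filter (fun m => Odd (m + 1)), (1 - (X : PowerSeries ℚ) ^ (m + 1))⁻¹) *
        ∏ k ∈ range (N / 2), (1 - (X : PowerSeries ℚ) ^ (2 * (k + 1)))⁻¹ := by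
    rw [← prod_filter_mul_prod_filter_not (range N) (fun m => Odd (m + 1)), himg,
      prod_image (by intro x _ y _ h; simp only at h; omega)]
    have he : ∀ k : ℕ, 2 * k + 1 + 1 = 2 * (k + 1) := fun k => by ring
    simp_rw [he]
  have hpair : (∏ k ∈ range (N / 2), (1 - (X : PowerSeries ℚ) ^ (2 * (k + 1)))) *
      ∏ k ∈ range (N / 2), (1 - (X : PowerSeries ℚ) ^ (2 * (k + 1)))⁻¹ = 1 := by
    rw [← prod_mul_distrib,
      prod_congr rfl fun k _ => PowerSeries.mul_inv_cancel _ (constCoeff_one_sub_X_pow _ (by omega))]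
    exact prod_const_one
  calc (∏ m ∈ range N, (1 + (X : PowerSeries ℚ) ^ (m + 1)))
      = _ := hA
    _ = ((∏ m ∈ range N \ range (N / 2), (1 - (X : PowerSeries ℚ) ^ (2 * (m + 1)))) *
          ∏ m ∈ range (N / 2), (1 - (X : PowerSeries ℚ) ^ (2 * (m + 1)))) *
        ((∏ m ∈ (range N).filter (fun m => Odd (m + 1)), (1 - (X : PowerSeries ℚ) ^ (m + 1))⁻¹) *
          ∏ k ∈ range (N / 2), (1 - (X : PowerSeries ℚ) ^ (2 * (k + 1)))⁻¹) := by
        rw [← hsplit2, ← hsplitInv]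
    _ = ((∏ m ∈ (range N).filter (fun m => Odd (m + 1)), (1 - (X : PowerSeries ℚ) ^ (m + 1))⁻¹) *
          ∏ m ∈ range N \ range (N / 2), (1 - (X : PowerSeries ℚ) ^ (2 * (m + 1)))) *
        ((∏ m ∈ range (N / 2), (1 - (X : PowerSeries ℚ) ^ (2 * (m + 1)))) *
          ∏ k ∈ range (N / 2), (1 - (X : PowerSeries ℚ) ^ (2 * (k + 1)))⁻¹) := by ring
    _ = _ := by rw [hpair, mul_one]

theorem coeff1 (r n : ℕ) :
    coeff (R := ℚ) n (∏ m ∈ range (n + 1),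
        (1 + X ^ (m + 1)) * (1 - X ^ (2 ^ r * (m + 1)) : PowerSeries ℚ)⁻¹)
    = coeff (R := ℚ) n
        ((∏ m ∈ (range (n + 1)).filter (fun m => Odd (m + 1)),
            (1 - X ^ (m + 1) : PowerSeries ℚ)⁻¹)
          * ∏ m ∈ range (n + 1), (1 - X ^ (2 ^ r * (m + 1)) : PowerSeries ℚ)⁻¹) := by
  rw [prod_mul_distrib, prod_one_add_eq]
  have hre : ((∏ m ∈ (range (n + 1)).filter (fun m => Odd (m + 1)),
        (1 - (X : PowerSeries ℚ) ^ (m + 1))⁻¹) *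
      ∏ m ∈ range (n + 1) \ range ((n + 1) / 2), (1 - (X : PowerSeries ℚ) ^ (2 * (m + 1)))) *
      (∏ m ∈ range (n + 1), (1 - X ^ (2 ^ r * (m + 1)) : PowerSeries ℚ)⁻¹) =
      ((∏ m ∈ (range (n + 1)).filter (fun m => Odd (m + 1)),
        (1 - (X : PowerSeries ℚ) ^ (m + 1))⁻¹) *
      (∏ m ∈ range (n + 1), (1 - X ^ (2 ^ r * (m + 1)) : PowerSeries ℚ)⁻¹)) *
      ∏ m ∈ range (n + 1) \ range ((n + 1) / 2), (1 - (X : PowerSeries ℚ) ^ (2 * (m + 1))) := by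
    ring
  rw [hre]
  exact coeff_mul_prod_one_sub n _ _ _ (by
    intro m hm
    rw [mem_sdiff, mem_range, mem_range] at hm
    omega)


theorem coeff2 (r n : ℕ) (hr : 1 ≤ r) :
    coeff (R := ℚ) n (∏ m ∈ range (n + 1),
        (1 + X ^ (m + 1)) * (1 - X ^ (2 ^ r * (m + 1)) : PowerSeries ℚ)⁻¹)
    = coeff (R := ℚ) n
        ((∏ m ∈ (range (n + 1)).filter (fun m => ¬ 2 ^ (r - 1) ∣ (m + 1)),
            (1 + X ^ (m + 1) : PowerSeries ℚ))
          * ∏ k ∈ range ((n + 1) / 2 ^ (r - 1)),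
              (1 - X ^ (2 ^ (r - 1) * (k + 1)) : PowerSeries ℚ)⁻¹) := by
  set q := 2 ^ (r - 1) with hq
  have hq0 : 0 < q := Nat.pow_pos (by norm_num)
  have hQ : 2 ^ r = 2 * q := by
    conv_lhs => rw [show r = (r - 1) + 1 by omega]
    rw [pow_succ', hq]
  set N := n + 1 with hN
  set K := N / q with hK
  have hNK : N < q * (K + 1) := by
    by_contra h
    push_neg at h
    have h2 : (K + 1) * q ≤ N := by rwa [Nat.mul_comm q (K + 1)] at h
    have h3 := (Nat.le_div_iff_mul_le hq0).2 h2
    omega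
  have hKN : K ≤ N := Nat.div_le_self N q
  -- image identity for the multiples of q
  have himg : (range N).filter (fun m => q ∣ (m + 1)) =
      (range K).image (fun k => q * (k + 1) - 1) := by
    ext m
    simp only [mem_filter, mem_range, mem_image]
    constructor
    · rintro ⟨h1, t, ht⟩
      have ht1 : 1 ≤ t := by
        rcases Nat.eq_zero_or_pos t with h | h
        · rw [h, mul_zero] at ht; omega
        · exact h
      have h3 : q * t ≤ N := by rw [← ht]; omega
      have h4 : t ≤ K := (Nat.le_div_iff_mul_le hq0).2 (by rwa [Nat.mul_comm q t] at h3)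
      refine ⟨t - 1, by omega, ?_⟩
      have h5 : t - 1 + 1 = t := by omega
      rw [h5, ← ht]
      omega
    · rintro ⟨k, hk, rfl⟩
      have h5 : q * (k + 1) ≤ N := by
        have : k + 1 ≤ K := hk
        have h5' := (Nat.le_div_iff_mul_le hq0).1 this
        rwa [Nat.mul_comm (k + 1) q] at h5'
      have h6 : 1 ≤ q * (k + 1) := Nat.one_le_iff_ne_zero.2 (by positivity)
      have h7 : q * (k + 1) - 1 + 1 = q * (k + 1) := by omega
      refine ⟨by omega, ?_⟩
      rw [h7]
      exact dvd_mul_right q (k + 1)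
  have hinj : ∀ x ∈ range K, ∀ y ∈ range K,
      q * (x + 1) - 1 = q * (y + 1) - 1 → x = y := by
    intro x _ y _ h
    have hx : 1 ≤ q * (x + 1) := Nat.one_le_iff_ne_zero.2 (by positivity)
    have hy : 1 ≤ q * (y + 1) := Nat.one_le_iff_ne_zero.2 (by positivity)
    have : q * (x + 1) = q * (y + 1) := by omega
    have := Nat.eq_of_mul_eq_mul_left hq0 this
    omega
  have hsub : ∀ k : ℕ, q * (k + 1) - 1 + 1 = q * (k + 1) := by
    intro k
    have : 1 ≤ q * (k + 1) := Nat.one_le_iff_ne_zero.2 (by positivity)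
    omega
  -- split the (1+X^{m+1}) product
  have hA : (∏ m ∈ range N, (1 + (X : PowerSeries ℚ) ^ (m + 1))) =
      (∏ m ∈ (range N).filter (fun m => ¬ q ∣ (m + 1)), (1 + (X : PowerSeries ℚ) ^ (m + 1))) *
        ∏ k ∈ range K, (1 + (X : PowerSeries ℚ) ^ (q * (k + 1))) := by
    rw [← prod_filter_mul_prod_filter_not (range N) (fun m => ¬ q ∣ (m + 1))]
    simp only [not_not]
    rw [himg, prod_image hinj]
    simp_rw [hsub]
  -- turn the q-multiples factors into (1-X^{2^r k})(1-X^{q k})⁻¹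
  have hB : (∏ k ∈ range K, (1 + (X : PowerSeries ℚ) ^ (q * (k + 1)))) =
      (∏ k ∈ range K, (1 - (X : PowerSeries ℚ) ^ (2 ^ r * (k + 1)))) *
        ∏ k ∈ range K, (1 - (X : PowerSeries ℚ) ^ (q * (k + 1)))⁻¹ := by
    rw [← prod_mul_distrib]
    refine prod_congr rfl fun k _ => ?_
    have h1 := one_add_eq' (q * (k + 1)) (by positivity)
    rw [h1]
    congr 2
    rw [hQ]
    ring
  -- split the inverse product over the 2^r multiples
  have hC : (∏ m ∈ range N, (1 - (X : PowerSeries ℚ) ^ (2 ^ r * (m + 1)))⁻¹) =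
      (∏ m ∈ range N \ range K, (1 - (X : PowerSeries ℚ) ^ (2 ^ r * (m + 1)))⁻¹) *
        ∏ k ∈ range K, (1 - (X : PowerSeries ℚ) ^ (2 ^ r * (k + 1)))⁻¹ :=
    (prod_sdiff (range_subset_range.2 hKN)).symm
  have hpair : (∏ k ∈ range K, (1 - (X : PowerSeries ℚ) ^ (2 ^ r * (k + 1)))) *
      ∏ k ∈ range K, (1 - (X : PowerSeries ℚ) ^ (2 ^ r * (k + 1)))⁻¹ = 1 := by
    rw [← prod_mul_distrib,
      prod_congr rfl fun k _ => PowerSeries.mul_inv_cancel _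
        (constCoeff_one_sub_X_pow _ (by positivity))]
    exact prod_const_one
  rw [prod_mul_distrib, hA, hB, hC]
  have hre : ((∏ m ∈ (range N).filter (fun m => ¬ q ∣ (m + 1)),
        (1 + (X : PowerSeries ℚ) ^ (m + 1))) *
      ((∏ k ∈ range K, (1 - (X : PowerSeries ℚ) ^ (2 ^ r * (k + 1)))) *
        ∏ k ∈ range K, (1 - (X : PowerSeries ℚ) ^ (q * (k + 1)))⁻¹)) *
      ((∏ m ∈ range N \ range K, (1 - (X : PowerSeries ℚ) ^ (2 ^ r * (m + 1)))⁻¹) *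
        ∏ k ∈ range K, (1 - (X : PowerSeries ℚ) ^ (2 ^ r * (k + 1)))⁻¹) =
      ((∏ m ∈ (range N).filter (fun m => ¬ q ∣ (m + 1)),
        (1 + (X : PowerSeries ℚ) ^ (m + 1))) *
        ∏ k ∈ range K, (1 - (X : PowerSeries ℚ) ^ (q * (k + 1)))⁻¹) *
      ((∏ k ∈ range K, (1 - (X : PowerSeries ℚ) ^ (2 ^ r * (k + 1)))) *
        ∏ k ∈ range K, (1 - (X : PowerSeries ℚ) ^ (2 ^ r * (k + 1)))⁻¹) *
      ∏ m ∈ range N \ range K, (1 - (X : PowerSeries ℚ) ^ (2 ^ r * (m + 1)))⁻¹ := by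
    ring
  rw [hre, hpair, mul_one]
  exact coeff_mul_prod_inv n _ _ _ (by
    intro m hm
    rw [mem_sdiff, mem_range, mem_range] at hm
    have h1 : q * (K + 1) ≤ q * (m + 1) := Nat.mul_le_mul_left q (by omega)
    have h2 : N < q * (m + 1) := lt_of_lt_of_le hNK h1
    have h3 : q * (m + 1) ≤ 2 ^ r * (m + 1) := Nat.mul_le_mul_right _ (by omega)
    omega)


theorem card_filter_eq' {β : Type*} [Fintype β] (P : β → Prop) [DecidablePred P] :
    ((#(Finset.univ.filter P) : ℕ) : ℚ) = (Nat.card {x // P x} : ℚ) := by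
  rw [Nat.card_eq_fintype_card, Fintype.card_subtype]

theorem parts_le {n : ℕ} (p : n.Partition) {j : ℕ} (hj : j ∈ p.parts) : j ≤ n := by
  simpa [p.parts_sum] using Multiset.single_le_sum (fun _ _ => Nat.zero_le _) _ hj

theorem image_mul_univ (i : ℕ) : ((· * i) '' Set.univ) = {k | i ∣ k} := by
  ext k
  simp only [Set.image_univ, Set.mem_range, Set.mem_setOf_eq]
  constructor
  · rintro ⟨t, rfl⟩
    exact Dvd.intro_left t rfl
  · rintro ⟨t, rfl⟩
    exact ⟨t, mul_comm t i⟩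

theorem count1 (r n : ℕ) (hr : 1 ≤ r) :
    ((Nat.card {p : Nat.Partition n // ∀ i ∈ p.parts, Odd i ∨ 2 ^ r ∣ i} : ℕ) : ℚ) =
    coeff (R := ℚ) n
        ((∏ m ∈ (range (n + 1)).filter (fun m => Odd (m + 1)),
            (1 - X ^ (m + 1) : PowerSeries ℚ)⁻¹)
          * ∏ m ∈ range (n + 1), (1 - X ^ (2 ^ r * (m + 1)) : PowerSeries ℚ)⁻¹) := by
  set s₁ : Finset ℕ :=
    ((range (n + 1)).filter (fun m => Odd (m + 1))).image (· + 1) ∪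
      (range (n + 1)).image (fun m => 2 ^ r * (m + 1)) with hs₁
  have h2r : 0 < 2 ^ r := Nat.pow_pos (by norm_num)
  have hs : ∀ i ∈ s₁, 0 < i := by
    intro i hi
    rw [hs₁, mem_union, mem_image, mem_image] at hi
    rcases hi with ⟨m, _, rfl⟩ | ⟨m, _, rfl⟩
    · omega
    · positivity
  have hdisj : Disjoint (((range (n + 1)).filter (fun m => Odd (m + 1))).image (· + 1))
      ((range (n + 1)).image (fun m => 2 ^ r * (m + 1))) := by
    rw [Finset.disjoint_left]
    rintro a ha hb
    rw [mem_image] at ha hb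
    obtain ⟨m, hm, rfl⟩ := ha
    rw [mem_filter] at hm
    obtain ⟨k, _, hk⟩ := hb
    have h2 : 2 ∣ m + 1 := by
      rw [← hk]
      exact Dvd.dvd.mul_right (dvd_pow_self 2 (by omega)) _
    rcases hm.2 with ⟨t, ht⟩
    omega
  have hprod : (∏ i ∈ s₁, indicatorSeries ℚ ((· * i) '' Set.univ)) =
      (∏ m ∈ (range (n + 1)).filter (fun m => Odd (m + 1)),
          (1 - X ^ (m + 1) : PowerSeries ℚ)⁻¹)
        * ∏ m ∈ range (n + 1), (1 - X ^ (2 ^ r * (m + 1)) : PowerSeries ℚ)⁻¹ := by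
    rw [hs₁, prod_union hdisj, prod_image (by intro x _ y _ h; simp only at h; omega),
      prod_image (by
        intro x _ y _ h
        have := Nat.eq_of_mul_eq_mul_left h2r h
        omega)]
    congr 1
    · exact prod_congr rfl fun m _ => by
        rw [image_mul_univ, num_series'' _ (by omega)]
    · exact prod_congr rfl fun m _ => by
        rw [image_mul_univ, num_series'' _ (by positivity)]
  have hgf := partialGF_prop ℚ n s₁ hs (fun _ => Set.univ) (fun _ _ => trivial)
  rw [hprod] at hgf
  rw [← hgf]
  rw [card_filter_eq']
  norm_cast
  apply Nat.card_congr
  apply Equiv.subtypeEquivRight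
  intro p
  constructor
  · intro hp
    refine ⟨fun _ => trivial, fun j hj => ?_⟩
    have hj0 : 0 < j := p.parts_pos hj
    have hjn : j ≤ n := parts_le p hj
    rcases hp j hj with hodd | ⟨t, rfl⟩
    · rw [hs₁, mem_union, mem_image]
      exact Or.inl ⟨j - 1, by
        rw [mem_filter, mem_range]
        exact ⟨by omega, by rwa [Nat.sub_add_cancel hj0]⟩, Nat.sub_add_cancel hj0⟩
    · have ht1 : 1 ≤ t := by
        rcases Nat.eq_zero_or_pos t with h | h
        · rw [h, mul_zero] at hj0; omega
        · exact h
      have htn : t ≤ n := by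
        have : t ≤ 2 ^ r * t := Nat.le_mul_of_pos_left t h2r
        omega
      rw [hs₁, mem_union, mem_image, mem_image]
      refine Or.inr ⟨t - 1, by rw [mem_range]; omega, ?_⟩
      congr 1
      omega
  · rintro ⟨-, hp⟩ j hj
    have := hp j hj
    rw [hs₁, mem_union, mem_image, mem_image] at this
    rcases this with ⟨m, hm, rfl⟩ | ⟨m, _, rfl⟩
    · rw [mem_filter] at hm
      exact Or.inl hm.2
    · exact Or.inr (dvd_mul_right _ _)


theorem filter_dvd_image (q N : ℕ) (hq0 : 0 < q) :
    (range N).filter (fun m => q ∣ (m + 1)) = (range (N / q)).image (fun k => q * (k + 1) - 1) := by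
  ext m
  simp only [mem_filter, mem_range, mem_image]
  constructor
  · rintro ⟨h1, t, ht⟩
    have ht1 : 1 ≤ t := by
      rcases Nat.eq_zero_or_pos t with h | h
      · rw [h, mul_zero] at ht; omega
      · exact h
    have h3 : q * t ≤ N := by rw [← ht]; omega
    have h4 : t ≤ N / q := (Nat.le_div_iff_mul_le hq0).2 (by rwa [Nat.mul_comm q t] at h3)
    refine ⟨t - 1, by omega, ?_⟩
    have h5 : t - 1 + 1 = t := by omega
    rw [h5, ← ht]
    omega
  · rintro ⟨k, hk, rfl⟩
    have h5 : q * (k + 1) ≤ N := by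
      have h : k + 1 ≤ N / q := hk
      have h5' := (Nat.le_div_iff_mul_le hq0).1 h
      rwa [Nat.mul_comm (k + 1) q] at h5'
    have h6 : 1 ≤ q * (k + 1) := Nat.one_le_iff_ne_zero.2 (by positivity)
    have h7 : q * (k + 1) - 1 + 1 = q * (k + 1) := by omega
    refine ⟨by omega, ?_⟩
    rw [h7]
    exact dvd_mul_right q (k + 1)

theorem mul_pred_inj (q K : ℕ) (hq0 : 0 < q) : ∀ x ∈ range K, ∀ y ∈ range K,
    q * (x + 1) - 1 = q * (y + 1) - 1 → x = y := by
  intro x _ y _ h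
  have hx : 1 ≤ q * (x + 1) := Nat.one_le_iff_ne_zero.2 (by positivity)
  have hy : 1 ≤ q * (y + 1) := Nat.one_le_iff_ne_zero.2 (by positivity)
  have h1 : q * (x + 1) = q * (y + 1) := by omega
  have := Nat.eq_of_mul_eq_mul_left hq0 h1
  omega

theorem count2 (r n : ℕ) (hr : 1 ≤ r) :
    ((Nat.card {p : Nat.Partition n // ∀ i, ¬ (2 ^ (r - 1) ∣ i) → p.parts.count i ≤ 1} : ℕ) : ℚ) =
    coeff (R := ℚ) n
        ((∏ m ∈ (range (n + 1)).filter (fun m => ¬ 2 ^ (r - 1) ∣ (m + 1)),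
            (1 + X ^ (m + 1) : PowerSeries ℚ))
          * ∏ k ∈ range ((n + 1) / 2 ^ (r - 1)),
              (1 - X ^ (2 ^ (r - 1) * (k + 1)) : PowerSeries ℚ)⁻¹) := by
  set q := 2 ^ (r - 1) with hq
  have hq0 : 0 < q := Nat.pow_pos (by norm_num)
  set s₂ : Finset ℕ := (range (n + 1)).image (fun m => m + 1) with hs₂
  set c : ℕ → Set ℕ := fun j => if q ∣ j then Set.univ else ({0, 1} : Set ℕ) with hc
  have hs : ∀ i ∈ s₂, 0 < i := by
    intro i hi
    rw [hs₂, mem_image] at hi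
    obtain ⟨m, _, rfl⟩ := hi
    omega
  have hc0 : ∀ i, i ∉ s₂ → 0 ∈ c i := by
    intro i _
    rw [hc]
    dsimp only
    split_ifs
    · trivial
    · exact Or.inl rfl
  have hsub : ∀ k : ℕ, q * (k + 1) - 1 + 1 = q * (k + 1) := by
    intro k
    have : 1 ≤ q * (k + 1) := Nat.one_le_iff_ne_zero.2 (by positivity)
    omega
  have hprod : (∏ i ∈ s₂, indicatorSeries ℚ ((· * i) '' c i)) =
      (∏ m ∈ (range (n + 1)).filter (fun m => ¬ q ∣ (m + 1)),
          (1 + X ^ (m + 1) : PowerSeries ℚ))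
        * ∏ k ∈ range ((n + 1) / q), (1 - X ^ (q * (k + 1)) : PowerSeries ℚ)⁻¹ := by
    rw [hs₂, prod_image (by intro x _ y _ h; simp only at h; omega),
      ← prod_filter_mul_prod_filter_not (range (n + 1)) (fun m => ¬ q ∣ (m + 1))]
    congr 1
    · refine prod_congr rfl fun m hm => ?_
      rw [mem_filter] at hm
      have himg2 : ((· * (m + 1)) '' c (m + 1)) = ({0, m + 1} : Set ℕ) := by
        rw [hc]
        dsimp only
        rw [if_neg hm.2, Set.image_pair]
        norm_num
      rw [himg2, two_series]
    · simp only [not_not]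
      rw [filter_dvd_image q (n + 1) hq0, prod_image (mul_pred_inj q _ hq0)]
      refine prod_congr rfl fun k _ => ?_
      have hd : q ∣ q * (k + 1) - 1 + 1 := by
        rw [hsub k]; exact dvd_mul_right q (k + 1)
      rw [hc]
      dsimp only
      rw [if_pos hd, image_mul_univ, ← num_series'' _ (by omega), hsub k]
  have hgf := partialGF_prop ℚ n s₂ hs c hc0
  rw [hprod] at hgf
  rw [← hgf, card_filter_eq']
  norm_cast
  apply Nat.card_congr
  apply Equiv.subtypeEquivRight
  intro p
  constructor
  · intro hp
    refine ⟨fun j => ?_, fun j hj => ?_⟩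
    · rw [hc]
      dsimp only
      split_ifs with hd
      · trivial
      · have h1 := hp j hd
        interval_cases h : Multiset.count j p.parts
        · exact Or.inl rfl
        · exact Or.inr rfl
    · have hj0 : 0 < j := p.parts_pos hj
      have hjn : j ≤ n := parts_le p hj
      rw [hs₂, mem_image]
      exact ⟨j - 1, by rw [mem_range]; omega, by omega⟩
  · rintro ⟨h1, -⟩ i hdi
    have h2 := h1 i
    rw [hc] at h2
    dsimp only at h2
    rw [if_neg hdi] at h2
    rcases h2 with h2 | h2 <;> simp_all

end
end FrAux

/-- For `r ≥ 2`, the coefficient `p_r(n)` of `x^n` in `∏_{m≥1}(1+x^m)/(1-x^{2^r m})`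
equals the number of partitions of `n` with every part odd or divisible by `2^r`,
which also equals the number of partitions of `n` in which parts not divisible by
`2^{r-1}` are distinct; in particular `p_2(n) = pod(n)`. -/
theorem fr_partition_counts (r : ℕ) (hr : 2 ≤ r) (n : ℕ) :
    ((PowerSeries.coeff (R := ℚ) n)
      (∏ m ∈ Finset.range (n + 1),
        (1 + PowerSeries.X ^ (m + 1)) * (1 - PowerSeries.X ^ (2 ^ r * (m + 1)) : PowerSeries ℚ)⁻¹)
      = Nat.card {p : Nat.Partition n // ∀ i ∈ p.parts, Odd i ∨ 2 ^ r ∣ i})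
    ∧ ((PowerSeries.coeff (R := ℚ) n)
      (∏ m ∈ Finset.range (n + 1),
        (1 + PowerSeries.X ^ (m + 1)) * (1 - PowerSeries.X ^ (2 ^ r * (m + 1)) : PowerSeries ℚ)⁻¹)
      = Nat.card {p : Nat.Partition n // ∀ i, ¬ (2 ^ (r - 1) ∣ i) → p.parts.count i ≤ 1})
    ∧ ((PowerSeries.coeff (R := ℚ) n)
      (∏ m ∈ Finset.range (n + 1),
        (1 + PowerSeries.X ^ (m + 1)) * (1 - PowerSeries.X ^ (2 ^ 2 * (m + 1)) : PowerSeries ℚ)⁻¹)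
      = Nat.card {p : Nat.Partition n // ∀ i, Odd i → p.parts.count i ≤ 1}) := by
  refine ⟨(FrAux.coeff1 r n).trans (FrAux.count1 r n (by omega)).symm,
    (FrAux.coeff2 r n (by omega)).trans (FrAux.count2 r n (by omega)).symm, ?_⟩
  have h3 := (FrAux.coeff2 2 n (by norm_num)).trans (FrAux.count2 2 n (by norm_num)).symm
  rw [h3]
  norm_cast
  apply Nat.card_congr
  apply Equiv.subtypeEquivRight
  intro p
  constructor <;> intro h i hi
  · refine h i ?_
    rw [Nat.odd_iff] at hi
    norm_num
    omega
  · refine h i ?_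
    norm_num at hi
    rw [Nat.odd_iff]
    omega
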